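/- arXiv:1301.0478 — 2 statements merged into one kernel-verified Lean document; each statement's English description precedes it below -/
import Mathlib

section
/- Let a, b be natural numbers and let R be the quotient of the polynomial ring ℂ[x_1,…,x_a,y_1,…,y_b] by the ideal generated by the squares x_1²,…,x_a²,y_1²,…,y_b². The group Sym(a) × Sym(b) acts on R by ℂ-algebra automorphisms, permuting the variables x_1,…,x_a and the variables y_1,…,y_b separately. Then every element of R fixed by every element of Sym(a) × Sym(b) lies in the ℂ-subalgebra of R generated by the images of x_1+⋯+x_a and y_1+⋯+y_b. -/
/-!
Averaging `q` over the finite group gives a genuinely invariant polynomial with the same image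
in `R`. By the fundamental theorem of symmetric polynomials, applied over `ℂ[y]` in the
`x`-variables and then to the coefficients, which are symmetric in `y` by uniqueness, an
invariant polynomial is a polynomial in the elementary symmetric polynomials `e_k(x)`, `e_k(y)`.
Modulo the squares every power sum `p_m` with `m ≥ 2` vanishes, so Newton's identities collapse
to `k e_k = e_{k-1} p_1`, that is `e_k = p_1 ^ k / k!`.
-/

open MvPolynomial

/-- The ideal of `ℂ[x_1,…,x_a,y_1,…,y_b]` generated by the squares of all the variables. -/
noncomputable def sqIdeal (a b : ℕ) : Ideal (MvPolynomial (Fin a ⊕ Fin b) ℂ) :=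
  Ideal.span {P : MvPolynomial (Fin a ⊕ Fin b) ℂ | ∃ v, P = X v ^ 2}

/-- `R = ℂ[x_1,…,x_a,y_1,…,y_b] / (x_1²,…,x_a²,y_1²,…,y_b²)`. -/
noncomputable abbrev SqRing (a b : ℕ) : Type :=
  MvPolynomial (Fin a ⊕ Fin b) ℂ ⧸ sqIdeal a b

open Equiv
open scoped Nat

namespace Representation

variable {k G V W : Type*} [CommRing k] [Group G] [Fintype G] [Invertible (Fintype.card G : k)]
  [AddCommGroup V] [Module k V] [AddCommGroup W] [Module k W]

theorem averageMap_apply (ρ : Representation k G V) (v : V) :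
    ρ.averageMap v = ⅟(Fintype.card G : k) • ∑ g : G, ρ g v := by
  simp [averageMap, GroupAlgebra.average, map_sum]

theorem map_averageMap_of_forall_map_eq (ρ : Representation k G V) (π : V →ₗ[k] W)
    {v : V} {w : W} (h : ∀ g, π (ρ g v) = w) : π (ρ.averageMap v) = w := by
  rw [averageMap_apply, map_smul, map_sum, Finset.sum_congr rfl fun g _ => h g, Finset.sum_const,
    Finset.card_univ, ← Nat.cast_smul_eq_nsmul k, smul_smul, invOf_mul_self, one_smul]

end Representation

namespace MvPolynomial

section SquareZero

variable {σ K A : Type*} [Fintype σ] [CommRing A] {x : σ → A}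

theorem aeval_psum_eq_zero_of_sq_eq_zero [CommRing K] [Algebra K A]
    (hx : ∀ i, x i ^ 2 = 0) {m : ℕ} (hm : 2 ≤ m) :
    aeval x (psum σ K m) = 0 := by
  simp [psum, pow_eq_zero_of_le hm (hx _)]

open Finset in
theorem succ_mul_aeval_esymm_succ_of_sq_eq_zero [CommRing K] [Algebra K A]
    (hx : ∀ i, x i ^ 2 = 0) (k : ℕ) :
    (k + 1) * aeval x (esymm σ K (k + 1)) = aeval x (esymm σ K k) * ∑ i, x i := by
  have newton := congrArg (aeval x) (mul_esymm_eq_sum σ K (k + 1))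
  rw [map_mul, map_mul, map_sum, sum_eq_single_of_mem (k, 1) (by simp)] at newton
  · have hsign : (-1 : A) ^ (k + 1 + 1 + k) = 1 := Even.neg_one_pow ⟨k + 1, by ring⟩
    simpa [psum_one, ← mul_assoc, ← pow_add, hsign] using newton
  rintro ⟨i, j⟩ hij hne
  have hj : 2 ≤ j := by
    simp only [mem_filter, HasAntidiagonal.mem_antidiagonal, ne_eq, Prod.mk.injEq] at hij hne
    omega
  rw [map_mul, aeval_psum_eq_zero_of_sq_eq_zero hx hj, mul_zero]

theorem factorial_mul_aeval_esymm_of_sq_eq_zero [CommRing K] [Algebra K A]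
    (hx : ∀ i, x i ^ 2 = 0) (k : ℕ) :
    k ! * aeval x (esymm σ K k) = (∑ i, x i) ^ k := by
  induction k with
  | zero => simp [esymm_zero]
  | succ k ih =>
    rw [pow_succ, ← ih, mul_assoc, ← succ_mul_aeval_esymm_succ_of_sq_eq_zero hx,
      Nat.factorial_succ]
    push_cast
    ring

theorem aeval_esymm_mem_adjoin_sum_of_sq_eq_zero [Field K] [CharZero K] [Algebra K A]
    (hx : ∀ i, x i ^ 2 = 0) (k : ℕ) :
    aeval x (esymm σ K k) ∈ Algebra.adjoin K {∑ i, x i} := by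
  have h : aeval x (esymm σ K k) = (k ! : K)⁻¹ • (∑ i, x i) ^ k := by
    rw [← factorial_mul_aeval_esymm_of_sq_eq_zero (K := K) hx, ← map_natCast (algebraMap K A),
      ← Algebra.smul_def, smul_smul, inv_mul_cancel₀ (Nat.cast_ne_zero.mpr k.factorial_ne_zero),
      one_smul]
  rw [h]
  exact Subalgebra.smul_mem _ (Subalgebra.pow_mem _ (Algebra.self_mem_adjoin_singleton K _) _) _

end SquareZero

section BlockSymmetric

variable {σ τ R : Type*} [CommRing R]

theorem mem_adjoin_range_esymm_of_isSymmetric [Fintype σ] {p : MvPolynomial σ R}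
    (hp : p.IsSymmetric) : p ∈ Algebra.adjoin R (Set.range (esymm σ R)) := by
  obtain ⟨q, hq⟩ := esymmAlgHom_surjective R (n := Fintype.card σ) le_rfl ⟨p, hp⟩
  have hpq : p = aeval (fun i : Fin _ => esymm σ R (i + 1)) q := by
    rw [← esymmAlgHom_apply, hq]
  have hq' := AlgHom.mem_range_self (aeval fun i : Fin _ => esymm σ R (i + 1)) q
  rw [aeval_range, ← hpq] at hq'
  exact Algebra.adjoin_mono (Set.range_comp_subset_range (fun i : Fin _ => (i : ℕ) + 1) _) hq'

theorem rename_sumAlgEquiv (e : Perm σ) (p : MvPolynomial (σ ⊕ τ) R) :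
    rename e (sumAlgEquiv R σ τ p) =
      sumAlgEquiv R σ τ (rename (sumCongr e (Equiv.refl τ)) p) := by
  induction p using MvPolynomial.induction_on with
  | C r => simp
  | add p q hp hq => simp [hp, hq]
  | mul_X p v hp => cases v <;> simp [hp]

theorem map_rename_sumAlgEquiv (f : Perm τ) (p : MvPolynomial (σ ⊕ τ) R) :
    map (rename f : MvPolynomial τ R →ₐ[R] _) (sumAlgEquiv R σ τ p) =
      sumAlgEquiv R σ τ (rename (sumCongr (Equiv.refl σ) f) p) := by
  induction p using MvPolynomial.induction_on with
  | C r => simp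
  | add p q hp hq => simp [hp, hq]
  | mul_X p v hp => cases v <;> simp [hp]

theorem sumAlgEquiv_symm_C (c : MvPolynomial τ R) :
    (sumAlgEquiv R σ τ).symm (C c) = rename Sum.inr c := by
  rw [AlgEquiv.symm_apply_eq]
  exact (AlgHom.congr_fun (sumAlgEquiv_comp_rename_inr R σ τ) c).symm

theorem sumAlgEquiv_symm_esymm [Fintype σ] (k : ℕ) :
    (sumAlgEquiv R σ τ).symm (esymm σ (MvPolynomial τ R) k) =
      rename Sum.inl (esymm σ R k) := by
  rw [AlgEquiv.symm_apply_eq]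
  have := AlgHom.congr_fun (sumAlgEquiv_comp_rename_inl R σ τ) (esymm σ R k)
  rw [AlgHom.comp_apply, AlgEquiv.coe_toAlgHom] at this
  rw [this, mapAlgHom_apply, map_esymm]

theorem map_aeval_esymm [Fintype σ] {ι B B' : Type*} [CommRing B] [CommRing B'] (g : B →+* B')
    (s : ι → ℕ) (F : MvPolynomial ι B) :
    map g (aeval (fun i => esymm σ B (s i)) F) = aeval (fun i => esymm σ B' (s i)) (map g F) := by
  rw [map_aeval, aeval_def, eval₂_map]
  simp only [map_esymm, algebraMap_eq, map_comp_C]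
  rfl

theorem mem_adjoin_rename_esymm_of_forall_rename_sumCongr_eq [Fintype σ] [Fintype τ]
    {p : MvPolynomial (σ ⊕ τ) R}
    (hp : ∀ (e : Perm σ) (f : Perm τ), rename (sumCongr e f) p = p) :
    p ∈ Algebra.adjoin R (Set.range (fun k => rename Sum.inl (esymm σ R k)) ∪
      Set.range (fun k => rename Sum.inr (esymm τ R k))) := by
  have hsym : (sumAlgEquiv R σ τ p).IsSymmetric := fun e => by rw [rename_sumAlgEquiv, hp]
  obtain ⟨F, hF⟩ := esymmAlgHom_surjective (MvPolynomial τ R) le_rfl ⟨_, hsym⟩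
  have hpF :
      sumAlgEquiv R σ τ p = aeval (fun i : Fin (Fintype.card σ) => esymm σ _ (i + 1)) F := by
    rw [← esymmAlgHom_apply, hF]
  -- the coefficients of `F` are symmetric because `F` is unique
  have hcoeff : ∀ d, (coeff d F).IsSymmetric := by
    intro d f
    have hfix : map (rename f).toRingHom F = F := by
      apply esymmAlgHom_injective (MvPolynomial τ R) le_rfl
      apply Subtype.ext
      rw [esymmAlgHom_apply, esymmAlgHom_apply, ← map_aeval_esymm, ← hpF]
      exact (map_rename_sumAlgEquiv f p).trans (by rw [hp])
    simpa [coeff_map] using congrArg (coeff d) hfix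
  rw [← (sumAlgEquiv R σ τ).symm_apply_apply p, hpF, ← AlgEquiv.coe_toAlgHom,
    ← Subalgebra.mem_comap, aeval_def]
  refine eval₂_mem (fun d _ => ?_) (fun i => ?_) <;>
    rw [Subalgebra.mem_comap, AlgEquiv.coe_toAlgHom]
  · rw [algebraMap_eq, sumAlgEquiv_symm_C]
    refine (Subalgebra.mem_comap _ (rename Sum.inr) _).mp
      (Algebra.adjoin_le ?_ (mem_adjoin_range_esymm_of_isSymmetric (hcoeff d)))
    rintro _ ⟨k, rfl⟩
    exact Algebra.subset_adjoin (Or.inr ⟨k, rfl⟩)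
  · rw [sumAlgEquiv_symm_esymm]
    exact Algebra.subset_adjoin (Or.inl ⟨_, rfl⟩)

end BlockSymmetric

noncomputable def renameRep (R ι : Type*) [CommRing R] :
    Representation R (Perm ι) (MvPolynomial ι R) where
  toFun e := (rename e).toLinearMap
  map_one' := by ext; simp
  map_mul' e f := by ext; simp [rename_rename]

end MvPolynomial

theorem mk_X_sq (a b : ℕ) (v : Fin a ⊕ Fin b) :
    Ideal.Quotient.mk (sqIdeal a b) (X v) ^ 2 = 0 := by
  rw [← map_pow, Ideal.Quotient.eq_zero_iff_mem]
  exact Ideal.subset_span ⟨v, rfl⟩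

theorem mk_rename_esymm_mem_adjoin (a b : ℕ) {ι : Type*} [Fintype ι]
    (j : ι → Fin a ⊕ Fin b) (k : ℕ) :
    Ideal.Quotient.mk (sqIdeal a b) (rename j (esymm ι ℂ k)) ∈
      Algebra.adjoin ℂ {Ideal.Quotient.mk (sqIdeal a b) (∑ i, X (j i))} := by
  have h := aeval_esymm_mem_adjoin_sum_of_sq_eq_zero (K := ℂ)
    (x := fun i => Ideal.Quotient.mk (sqIdeal a b) (X (j i))) (fun i => mk_X_sq a b (j i)) k
  rw [map_sum]
  convert h using 1
  rw [← Ideal.Quotient.mkₐ_eq_mk ℂ, ← aeval_X_left_apply (rename j _), comp_aeval_apply,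
    aeval_rename]
  rfl

theorem invariants_generated_by_power_sums_general (a b : ℕ)
    (r : SqRing a b) (q : MvPolynomial (Fin a ⊕ Fin b) ℂ)
    (hr : ∀ σ : Equiv.Perm (Fin a) × Equiv.Perm (Fin b),
      Ideal.Quotient.mk (sqIdeal a b) (rename (Equiv.sumCongr σ.1 σ.2) q) = r) :
    r ∈ Algebra.adjoin ℂ
      ({Ideal.Quotient.mk (sqIdeal a b) (∑ i : Fin a, X (Sum.inl i)),
        Ideal.Quotient.mk (sqIdeal a b) (∑ j : Fin b, X (Sum.inr j))} : Set (SqRing a b)) := by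
  let ρ : Representation ℂ (Perm (Fin a) × Perm (Fin b)) (MvPolynomial (Fin a ⊕ Fin b) ℂ) :=
    (renameRep ℂ (Fin a ⊕ Fin b)).comp (Perm.sumCongrHom (Fin a) (Fin b))
  have : Invertible (Fintype.card (Perm (Fin a) × Perm (Fin b)) : ℂ) :=
    invertibleOfNonzero (Nat.cast_ne_zero.mpr Fintype.card_ne_zero)
  have hmk : Ideal.Quotient.mkₐ ℂ (sqIdeal a b) (ρ.averageMap q) = r :=
    ρ.map_averageMap_of_forall_map_eq (Ideal.Quotient.mkₐ ℂ (sqIdeal a b)).toLinearMap hr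
  have hinv := mem_adjoin_rename_esymm_of_forall_rename_sumCongr_eq
    fun e f => ρ.averageMap_invariant q (e, f)
  rw [← hmk]
  refine (Subalgebra.mem_comap _ _ _).mp (Algebra.adjoin_le ?_ hinv)
  rintro _ (⟨k, rfl⟩ | ⟨k, rfl⟩)
  · exact Algebra.adjoin_mono (by simp) (mk_rename_esymm_mem_adjoin a b Sum.inl k)
  · exact Algebra.adjoin_mono (by simp) (mk_rename_esymm_mem_adjoin a b Sum.inr k)

/-- Every element of `R` fixed by the `Sym(a) × Sym(b)`-action (permuting the `x`-variables and
`y`-variables separately) lies in the `ℂ`-subalgebra of `R` generated by the images of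
`x_1 + ⋯ + x_a` and `y_1 + ⋯ + y_b`. -/
theorem invariants_generated_by_power_sums (a b : ℕ)
    (r : SqRing a b) (q : MvPolynomial (Fin a ⊕ Fin b) ℂ)
    (hq : Ideal.Quotient.mk (sqIdeal a b) q = r)
    (hr : ∀ σ : Equiv.Perm (Fin a) × Equiv.Perm (Fin b),
      Ideal.Quotient.mk (sqIdeal a b) (rename (Equiv.sumCongr σ.1 σ.2) q) = r) :
    r ∈ Algebra.adjoin ℂ
      ({Ideal.Quotient.mk (sqIdeal a b) (∑ i : Fin a, X (Sum.inl i)),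
        Ideal.Quotient.mk (sqIdeal a b) (∑ j : Fin b, X (Sum.inr j))} : Set (SqRing a b)) :=
  invariants_generated_by_power_sums_general a b r q hr
end

section
/- Let a, b be natural numbers and let R be the quotient of the polynomial ring ℂ[x_1,…,x_a,y_1,…,y_b] by the ideal generated by the squares x_1²,…,x_a²,y_1²,…,y_b². Then the family of elements (x_1+⋯+x_a)^j · (y_1+⋯+y_b)^i of R, indexed by pairs (j,i) with 0 ≤ j ≤ a and 0 ≤ i ≤ b, is linearly independent over ℂ. -/
open MvPolynomial

/-! Coefficients of squarefree monomials vanish on the ideal generated by the squares, so they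
descend to linear forms on `R`. The coefficient of `∏_{k ∈ s} x_k · ∏_{k ∈ t} y_k` in
`(∑ x)^j (∑ y)^i` is `j! i!` if `|s| = j` and `|t| = i`, and `0` otherwise by bihomogeneity.
Choosing one such monomial for every `(j, i)` gives linear forms pairing diagonally with the
family, which is therefore linearly independent. -/

open Finset
open scoped Nat

theorem linearIndependent_comp_of_pairing {ι R M N : Type*} [CommRing R] [NoZeroDivisors R]
    [AddCommGroup M] [Module R M] [AddCommGroup N] [Module R N]
    (π : M →ₗ[R] N) (v : ι → M) (f : ι → Module.Dual R M)
    (hker : ∀ i, LinearMap.ker π ≤ LinearMap.ker (f i))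
    (hoff : Pairwise fun i j => f i (v j) = 0) (hdiag : ∀ i, f i (v i) ≠ 0) :
    LinearIndependent R (π ∘ v) := by
  refine linearIndependent_iff'.mpr fun s g hrel i hi => ?_
  have hsum : ∑ j ∈ s, g j • v j ∈ LinearMap.ker π := by
    simpa only [LinearMap.mem_ker, map_sum, map_smul, Function.comp_apply] using hrel
  have hpair := hker i hsum
  rw [LinearMap.mem_ker, map_sum,
    sum_eq_single i (fun j _ hji => by simp [hoff hji.symm]) (absurd hi)] at hpair
  simpa [hdiag i] using hpair

namespace MvPolynomial

variable {σ R : Type*} [CommSemiring R]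

theorem coeff_eq_zero_of_mem_span_X_sq {P : MvPolynomial σ R}
    (hP : P ∈ Ideal.span {Q | ∃ v, Q = X v ^ 2}) {m : σ →₀ ℕ} (hm : ∀ v, m v ≤ 1) :
    coeff m P = 0 := by
  have hgen : {Q : MvPolynomial σ R | ∃ v, Q = X v ^ 2} =
      (fun s => monomial s (1 : R)) '' Set.range fun v => Finsupp.single v 2 := by
    ext Q
    simp [X_pow_eq_monomial, eq_comm]
  rw [hgen, mem_ideal_span_monomial_image] at hP
  by_contra hne
  obtain ⟨_, ⟨v, rfl⟩, hle⟩ := hP m (mem_support_iff.mpr hne)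
  simpa using (hle v).trans (hm v)

noncomputable def sqfreeExp (T : Finset σ) : σ →₀ ℕ :=
  ∑ v ∈ T, Finsupp.single v 1

@[simp]
theorem sqfreeExp_empty : sqfreeExp (∅ : Finset σ) = 0 :=
  sum_empty

theorem sqfreeExp_apply [DecidableEq σ] (T : Finset σ) (v : σ) :
    sqfreeExp T v = if v ∈ T then 1 else 0 := by
  simp [sqfreeExp, Finsupp.finsetSum_apply, Finsupp.single_apply]

theorem sqfreeExp_le_one (T : Finset σ) (v : σ) : sqfreeExp T v ≤ 1 := by
  classical
  rw [sqfreeExp_apply]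
  split <;> simp

theorem sqfreeExp_eq_single_add_erase [DecidableEq σ] {T : Finset σ} {v : σ} (hv : v ∈ T) :
    sqfreeExp T = Finsupp.single v 1 + sqfreeExp (T.erase v) :=
  (add_sum_erase T _ hv).symm

theorem weight_sqfreeExp {M : Type*} [AddCommMonoid M] (w : σ → M) (T : Finset σ) :
    Finsupp.weight w (sqfreeExp T) = ∑ v ∈ T, w v := by
  simp [sqfreeExp, Finsupp.weight_single]

theorem coeff_sqfreeExp_mul_X [DecidableEq σ] (T : Finset σ) (P : MvPolynomial σ R) (v : σ) :
    coeff (sqfreeExp T) (P * X v) = if v ∈ T then coeff (sqfreeExp (T.erase v)) P else 0 := by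
  have hsupp : v ∈ (sqfreeExp T).support ↔ v ∈ T := by simp [sqfreeExp_apply]
  rw [coeff_mul_X']
  by_cases hv : v ∈ T
  · rw [if_pos (hsupp.2 hv), if_pos hv, sqfreeExp_eq_single_add_erase hv, add_tsub_cancel_left]
  · rw [if_neg (mt hsupp.1 hv), if_neg hv]

/-- Each of the `n!` orderings of `U` contributes one to the coefficient. -/
theorem coeff_sqfreeExp_union_mul_sum_X_pow [DecidableEq σ] {T₀ U S : Finset σ}
    (hT₀ : Disjoint T₀ S) (hU : U ⊆ S) (P : MvPolynomial σ R) {n : ℕ} (hn : #U = n) :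
    coeff (sqfreeExp (T₀ ∪ U)) (P * (∑ v ∈ S, X v) ^ n) = n ! * coeff (sqfreeExp T₀) P := by
  induction n generalizing U with
  | zero => simp [card_eq_zero.1 hn]
  | succ n ih =>
    have hfilter : {v ∈ S | v ∈ T₀ ∪ U} = U := by
      ext v
      simp only [mem_filter, mem_union]
      exact ⟨fun ⟨hS, h⟩ => h.resolve_left fun hT => disjoint_left.1 hT₀ hT hS,
        fun h => ⟨hU h, Or.inr h⟩⟩
    have herase : ∀ v ∈ U, (T₀ ∪ U).erase v = T₀ ∪ U.erase v := fun v hv => by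
      rw [erase_union_distrib, erase_eq_of_notMem (disjoint_right.1 hT₀ (hU hv))]
    calc coeff (sqfreeExp (T₀ ∪ U)) (P * (∑ v ∈ S, X v) ^ (n + 1))
        = ∑ v ∈ S, if v ∈ T₀ ∪ U then
            coeff (sqfreeExp ((T₀ ∪ U).erase v)) (P * (∑ v ∈ S, X v) ^ n) else 0 := by
          simp only [pow_succ, ← mul_assoc, mul_sum, coeff_sum, coeff_sqfreeExp_mul_X]
      _ = ∑ v ∈ U, coeff (sqfreeExp (T₀ ∪ U.erase v)) (P * (∑ v ∈ S, X v) ^ n) := by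
          rw [← sum_filter, hfilter]
          exact sum_congr rfl fun v hv => by rw [herase v hv]
      _ = ∑ v ∈ U, n ! * coeff (sqfreeExp T₀) P := by
          refine sum_congr rfl fun v hv => ih ((erase_subset v U).trans hU) ?_
          rw [card_erase_of_mem hv, hn, Nat.add_sub_cancel]
      _ = (n + 1)! * coeff (sqfreeExp T₀) P := by
          rw [sum_const, hn, nsmul_eq_mul, Nat.factorial_succ]
          push_cast
          ring

theorem isWeightedHomogeneous_sum_X {M ι : Type*} [AddCommMonoid M] {w : σ → M} {d : M}
    (S : Finset ι) (x : ι → σ) (h : ∀ i ∈ S, w (x i) = d) :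
    IsWeightedHomogeneous w (∑ i ∈ S, X (x i) : MvPolynomial σ R) d :=
  IsWeightedHomogeneous.sum _ _ _ fun i hi => h i hi ▸ isWeightedHomogeneous_X R w (x i)

theorem coeff_sqfreeExp_sum_X_pow_mul_sum_X_pow {α β : Type*} [Fintype α] [Fintype β]
    [DecidableEq α] [DecidableEq β]
    (s : Finset α) (t : Finset β) (j i : ℕ) :
    coeff (sqfreeExp (s.map .inl ∪ t.map .inr))
        ((∑ k, X (Sum.inl k)) ^ j * (∑ k, X (Sum.inr k)) ^ i : MvPolynomial (α ⊕ β) R) =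
      if #s = j ∧ #t = i then (j ! * i ! : R) else 0 := by
  have hdisj : Disjoint (s.map .inl) (t.map .inr) := disjoint_map_inl_map_inr s t
  split_ifs with h
  · obtain ⟨rfl, rfl⟩ := h
    have hx : (∑ k, X (Sum.inl k) : MvPolynomial (α ⊕ β) R) = ∑ v ∈ univ.map .inl, X v := by
      rw [sum_map]; rfl
    have hy : (∑ k, X (Sum.inr k) : MvPolynomial (α ⊕ β) R) = ∑ v ∈ univ.map .inr, X v := by
      rw [sum_map]; rfl
    have hs := coeff_sqfreeExp_union_mul_sum_X_pow (T₀ := ∅) (U := s.map .inl)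
      (S := univ.map .inl) (disjoint_empty_left _) (map_subset_map.2 (subset_univ s))
      (1 : MvPolynomial (α ⊕ β) R) (card_map _)
    rw [empty_union, one_mul, sqfreeExp_empty, coeff_zero_one, mul_one] at hs
    rw [hx, hy, coeff_sqfreeExp_union_mul_sum_X_pow (disjoint_map_inl_map_inr s univ)
      (map_subset_map.2 (subset_univ t)) _ (card_map _), hs, mul_comm]
  · have hweight (w : α ⊕ β → ℕ) (dx dy : ℕ) (hwx : ∀ k, w (.inl k) = dx)
        (hwy : ∀ k, w (.inr k) = dy) (hne : #s * dx + #t * dy ≠ j * dx + i * dy) :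
        coeff (sqfreeExp (s.map .inl ∪ t.map .inr))
          ((∑ k, X (Sum.inl k)) ^ j * (∑ k, X (Sum.inr k)) ^ i : MvPolynomial (α ⊕ β) R) = 0 :=
      (((isWeightedHomogeneous_sum_X univ _ fun k _ => hwx k).pow j).mul
        ((isWeightedHomogeneous_sum_X univ _ fun k _ => hwy k).pow i)).coeff_eq_zero _ <| by
          simpa [weight_sqfreeExp, sum_union hdisj, hwx, hwy] using hne
    rcases not_and_or.1 h with hj | hi
    · exact hweight (Sum.elim 1 0) 1 0 (fun _ => rfl) (fun _ => rfl) (by simpa using hj)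
    · exact hweight (Sum.elim 0 1) 0 1 (fun _ => rfl) (fun _ => rfl) (by simpa using hi)

end MvPolynomial

/-- The family of elements `(x_1+⋯+x_a)^j · (y_1+⋯+y_b)^i` of `R`, indexed by pairs `(j,i)`
with `0 ≤ j ≤ a` and `0 ≤ i ≤ b`, is linearly independent over `ℂ`. -/
theorem power_sum_products_linearIndependent (a b : ℕ) :
    LinearIndependent ℂ (fun ji : Fin (a + 1) × Fin (b + 1) =>
      Ideal.Quotient.mk (sqIdeal a b)
        ((∑ i : Fin a, X (Sum.inl i)) ^ (ji.1 : ℕ) *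
          (∑ j : Fin b, X (Sum.inr j)) ^ (ji.2 : ℕ))) := by
  choose s hs using fun j : Fin (a + 1) =>
    exists_subset_card_eq (s := (univ : Finset (Fin a))) (n := j) (by simpa using j.is_le)
  choose t ht using fun i : Fin (b + 1) =>
    exists_subset_card_eq (s := (univ : Finset (Fin b))) (n := i) (by simpa using i.is_le)
  refine linearIndependent_comp_of_pairing (Ideal.Quotient.mkₐ ℂ (sqIdeal a b)).toLinearMap _
    (fun ji => lcoeff ℂ (sqfreeExp ((s ji.1).map .inl ∪ (t ji.2).map .inr))) ?_ ?_ ?_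
  · intro ji P hP
    exact coeff_eq_zero_of_mem_span_X_sq (Ideal.Quotient.eq_zero_iff_mem.1 hP) (sqfreeExp_le_one _)
  · rintro ⟨j, i⟩ ⟨j', i'⟩ hne
    have hne' : ¬((j : ℕ) = j' ∧ (i : ℕ) = i') := fun ⟨hj, hi⟩ =>
      hne (Prod.ext (Fin.ext hj) (Fin.ext hi))
    simp [coeff_sqfreeExp_sum_X_pow_mul_sum_X_pow, hs, ht, hne']
  · rintro ⟨j, i⟩
    simp [coeff_sqfreeExp_sum_X_pow_mul_sum_X_pow, hs, ht, Nat.factorial_ne_zero]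
end
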